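/- For n ≥ 2, the number of sub-words of length f_{2n} of words in A (i.e. the cardinality of F(A, f_{2n}) = ⋃_{k≥1} F(A_k, f_{2n})) is at most 2^(f_{2n−3} + 2n) · 5^(n−1). -/

import Mathlib

/-- The two-letter alphabet. -/
inductive Letter : Type
  | a : Letter
  | b : Letter
deriving DecidableEq

/-- A word is a finite sequence of letters. -/
abbrev Word := List Letter

/-- Concatenation set `UV = {uv : u ∈ U, v ∈ V}`. -/
def concatSet (U V : Set Word) : Set Word := {w | ∃ u ∈ U, ∃ v ∈ V, w = u ++ v}

mutual
  /-- The sets `A_n` of inflated words (indexed so that `Aset 1 = {a}`). -/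
  def Aset : ℕ → Set Word
    | 0 => ∅
    | 1 => {[Letter.a]}
    | n + 2 => concatSet (Bset (n + 1)) (concatSet (Aset (n + 1)) (Aset (n + 1)))
  /-- The sets `B_n` of inflated words (indexed so that `Bset 1 = {b}`). -/
  def Bset : ℕ → Set Word
    | 0 => ∅
    | 1 => {[Letter.b]}
    | n + 2 => concatSet (Aset (n + 1)) (Bset (n + 1)) ∪ concatSet (Bset (n + 1)) (Aset (n + 1))
end

/-- The sub-word `w[a,b] = w_a w_{a+1} … w_b` (1-indexed). -/
def wordSlice (w : Word) (i j : ℕ) : Word := (w.drop (i - 1)).take (j - i + 1)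

/-- `W[a,b] = {w[a,b] : w ∈ W}`. -/
def setSlice (W : Set Word) (i j : ℕ) : Set Word := {x | ∃ w ∈ W, x = wordSlice w i j}

/-- `x` is a sub-word (contiguous factor) of `w`. -/
def IsFactor (x w : Word) : Prop := ∃ u v : Word, w = u ++ x ++ v

/-- `F(S, m)`: the set of all sub-words of length `m` of words in `S`. -/
def FactorSet (S : Set Word) (m : ℕ) : Set Word :=
  {x | x.length = m ∧ ∃ w ∈ S, IsFactor x w}

/-- `F(A, m) = ⋃_{n ≥ 1} F(A_n, m)`. -/
def FA (m : ℕ) : Set Word := ⋃ n ∈ {n : ℕ | 1 ≤ n}, FactorSet (Aset n) m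

/-- `F(B, m) = ⋃_{n ≥ 1} F(B_n, m)`. -/
def FB (m : ℕ) : Set Word := ⋃ n ∈ {n : ℕ | 1 ≤ n}, FactorSet (Bset n) m

/-- The golden mean `τ = (1 + √5)/2`. -/
noncomputable def tau : ℝ := (1 + Real.sqrt 5) / 2

/-!
Every word of `A_k` with `k ≥ n` is a concatenation of level-`n` blocks from `A_n ∪ B_n`, of
lengths `f_{2n}` and `f_{2n-1}`. A factor of length `f_{2n}` is therefore a suffix of one block
followed by a prefix of the next, or by a whole `B_n`-block and a prefix of the block after it;
there are `f_{2n} + 1`, resp. `f_{2n-2} + 1`, ways to split its length.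

The heart of the matter is that the number of prefixes (or suffixes) of length `t` of words of
`A_n` or `B_n` is at most `2 ^ (⌊t / τ³⌋ + n)`. This follows by induction on `n` from
`|A_{m+2}| ≤ 2 ^ (f_{2m+1} - 1)`, `|B_{m+2}| ≤ 2 ^ (f_{2m} + 1)` and the superadditivity of
`t ↦ ⌊t / τ³⌋`, because `f_{2m+1} - 1 ≤ ⌊f_{2m+4} / τ³⌋` and `f_{2m} ≤ ⌊f_{2m+3} / τ³⌋`
(the Lucas identity `L_k² = 5 f_k² + 4 (-1)^k` makes `f_{k+3} ≈ τ³ f_k` exact). Multiplying the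
suffix and prefix counts and using `⌊f_{2n} / τ³⌋ < f_{2n-3}` gives
`|F(A, f_{2n})| ≤ (2 (f_{2n} + 1) + 4 (f_{2n-2} + 1)) 2 ^ (f_{2n-3} + 2n)`, and the first factor is
at most `5 ^ (n-1)` once `n ≥ 4`; for `n = 2, 3` the trivial bound `2 ^ f_{2n}` suffices.
-/

open Computability

instance : Fintype Letter := ⟨{.a, .b}, fun x => by cases x <;> simp⟩

lemma ncard_setOf_length_eq (m : ℕ) : {w : Word | w.length = m}.ncard = 2 ^ m := by
  rw [← Nat.card_coe_set_eq]
  exact (Nat.card_eq_fintype_card (α := List.Vector Letter m)).trans (by rw [card_vector]; rfl)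

lemma finite_of_forall_length_eq {S : Set Word} {L : ℕ} (h : ∀ w ∈ S, w.length = L) :
    S.Finite :=
  (List.finite_length_eq Letter L).subset h

lemma IsFactor.isInfix {x w : Word} (h : IsFactor x w) : x <:+: w :=
  let ⟨u, v, h⟩ := h; ⟨u, v, h.symm⟩

lemma fib_add_three (n : ℕ) : Nat.fib (n + 3) = 2 * Nat.fib (n + 1) + Nat.fib n := by
  have h2 : Nat.fib (n + 2) = Nat.fib n + Nat.fib (n + 1) := Nat.fib_add_two
  have h3 : Nat.fib (n + 3) = Nat.fib (n + 1) + Nat.fib (n + 2) := Nat.fib_add_two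
  omega

section Concat

variable {U V : Set Word}

lemma concatSet_eq_image2 : concatSet U V = Set.image2 (· ++ ·) U V := by
  ext w; simp [concatSet, eq_comm]

lemma Set.Finite.concatSet (hU : U.Finite) (hV : V.Finite) : (concatSet U V).Finite :=
  concatSet_eq_image2 ▸ hU.image2 _ hV

lemma length_of_mem_concatSet {L L' : ℕ} (hU : ∀ u ∈ U, u.length = L)
    (hV : ∀ v ∈ V, v.length = L') : ∀ w ∈ concatSet U V, w.length = L + L' := by
  rintro _ ⟨u, hu, v, hv, rfl⟩
  rw [List.length_append, hU u hu, hV v hv]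

lemma ncard_concatSet_le (hU : U.Finite) (hV : V.Finite) :
    (concatSet U V).ncard ≤ U.ncard * V.ncard := by
  rw [concatSet_eq_image2, ← Set.image_uncurry_prod, ← Set.ncard_prod]
  exact Set.ncard_image_le (hU.prod hV)

lemma ncard_concatSet_le_two_pow (hU : U.Finite) (hV : V.Finite) {a b : ℕ}
    (ha : U.ncard ≤ 2 ^ a) (hb : V.ncard ≤ 2 ^ b) : (concatSet U V).ncard ≤ 2 ^ (a + b) :=
  (ncard_concatSet_le hU hV).trans (pow_add 2 a b ▸ Nat.mul_le_mul ha hb)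

lemma mem_kstar_of_mem_concatSet {L : Language Letter} (hU : ∀ u ∈ U, u ∈ L∗)
    (hV : ∀ v ∈ V, v ∈ L∗) : ∀ w ∈ concatSet U V, w ∈ L∗ := by
  rintro _ ⟨u, hu, v, hv, rfl⟩
  rw [← kstar_mul_kstar L]
  exact Language.append_mem_mul (hU u hu) (hV v hv)

end Concat

lemma length_of_mem_Aset_Bset (n : ℕ) :
    (∀ w ∈ Aset (n + 1), w.length = Nat.fib (2 * n + 2)) ∧
      ∀ w ∈ Bset (n + 1), w.length = Nat.fib (2 * n + 1) := by
  induction n with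
  | zero => simp [Aset, Bset]
  | succ n ih =>
    have h3 : Nat.fib (2 * n + 3) = Nat.fib (2 * n + 1) + Nat.fib (2 * n + 2) := Nat.fib_add_two
    have h4 : Nat.fib (2 * n + 4) = Nat.fib (2 * n + 2) + Nat.fib (2 * n + 3) := Nat.fib_add_two
    obtain ⟨hA, hB⟩ := ih
    rw [show 2 * (n + 1) + 2 = 2 * n + 4 by ring, show 2 * (n + 1) + 1 = 2 * n + 3 by ring]
    refine ⟨fun w hw => ?_, fun w hw => ?_⟩
    · rw [length_of_mem_concatSet hB (length_of_mem_concatSet hA hA) w hw]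
      omega
    · rcases hw with hw | hw
      · rw [length_of_mem_concatSet hA hB w hw]; omega
      · rw [length_of_mem_concatSet hB hA w hw]; omega

lemma length_of_mem_Aset {n : ℕ} {w : Word} (hw : w ∈ Aset (n + 1)) :
    w.length = Nat.fib (2 * n + 2) :=
  (length_of_mem_Aset_Bset n).1 w hw

lemma length_of_mem_Bset {n : ℕ} {w : Word} (hw : w ∈ Bset (n + 1)) :
    w.length = Nat.fib (2 * n + 1) :=
  (length_of_mem_Aset_Bset n).2 w hw

lemma Aset_finite (n : ℕ) : (Aset (n + 1)).Finite :=
  finite_of_forall_length_eq fun _ => length_of_mem_Aset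

lemma Bset_finite (n : ℕ) : (Bset (n + 1)).Finite :=
  finite_of_forall_length_eq fun _ => length_of_mem_Bset

lemma Aset_Bset_nonempty (n : ℕ) : (Aset (n + 1)).Nonempty ∧ (Bset (n + 1)).Nonempty := by
  induction n with
  | zero => exact ⟨⟨_, rfl⟩, ⟨_, rfl⟩⟩
  | succ n ih =>
    obtain ⟨⟨u, hu⟩, ⟨v, hv⟩⟩ := ih
    exact ⟨⟨v ++ (u ++ u), v, hv, _, ⟨u, hu, u, hu, rfl⟩, rfl⟩,
      ⟨u ++ v, Or.inl ⟨u, hu, v, hv, rfl⟩⟩⟩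

lemma ncard_Aset_Bset_le (m : ℕ) :
    (Aset (m + 2)).ncard ≤ 2 ^ (Nat.fib (2 * m + 1) - 1) ∧
      (Bset (m + 2)).ncard ≤ 2 ^ (Nat.fib (2 * m) + 1) := by
  induction m with
  | zero =>
    have hA : (Aset 1).ncard ≤ 2 ^ 0 := (Set.ncard_singleton _).le
    have hB : (Bset 1).ncard ≤ 2 ^ 0 := (Set.ncard_singleton _).le
    have hAB := ncard_concatSet_le_two_pow (Aset_finite 0) (Bset_finite 0) hA hB
    have hBA := ncard_concatSet_le_two_pow (Bset_finite 0) (Aset_finite 0) hB hA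
    refine ⟨ncard_concatSet_le_two_pow (Bset_finite 0) ((Aset_finite 0).concatSet (Aset_finite 0))
      hB (ncard_concatSet_le_two_pow (Aset_finite 0) (Aset_finite 0) hA hA), ?_⟩
    exact (Set.ncard_union_le _ _).trans ((Nat.add_le_add hAB hBA).trans_eq (by norm_num))
  | succ m ih =>
    obtain ⟨hA, hB⟩ := ih
    have h3 : Nat.fib (2 * m + 3) = 2 * Nat.fib (2 * m + 1) + Nat.fib (2 * m) := fib_add_three _
    have h2 : Nat.fib (2 * m + 2) = Nat.fib (2 * m) + Nat.fib (2 * m + 1) := Nat.fib_add_two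
    have h1 : 0 < Nat.fib (2 * m + 1) := Nat.fib_pos.2 (by omega)
    have hAfin := Aset_finite (m + 1)
    have hBfin := Bset_finite (m + 1)
    rw [show 2 * (m + 1) + 1 = 2 * m + 3 by ring, show 2 * (m + 1) = 2 * m + 2 by ring]
    constructor
    · refine (ncard_concatSet_le_two_pow hBfin (hAfin.concatSet hAfin) hB
        (ncard_concatSet_le_two_pow hAfin hAfin hA hA)).trans (Nat.pow_le_pow_right two_pos ?_)
      omega
    · have hAB := ncard_concatSet_le_two_pow hAfin hBfin hA hB
      have hBA := ncard_concatSet_le_two_pow hBfin hAfin hB hA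
      rw [show Nat.fib (2 * m + 1) - 1 + (Nat.fib (2 * m) + 1) = Nat.fib (2 * m + 2) by omega]
        at hAB
      rw [show Nat.fib (2 * m) + 1 + (Nat.fib (2 * m + 1) - 1) = Nat.fib (2 * m + 2) by omega]
        at hBA
      exact (Set.ncard_union_le _ _).trans (by rw [pow_succ]; omega)

lemma tau_pow_three : tau ^ 3 = 2 + √5 := by
  have h : √5 ^ 2 = 5 := Real.sq_sqrt (by norm_num)
  unfold tau
  linear_combination (3 + √5) / 8 * h

lemma tau_pow_three_pos : 0 < tau ^ 3 := by
  rw [tau_pow_three]; positivity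

noncomputable def floorDivTauCube (t : ℕ) : ℕ := ⌊(t : ℝ) / tau ^ 3⌋₊

lemma floorDivTauCube_add_le (s t : ℕ) :
    floorDivTauCube s + floorDivTauCube t ≤ floorDivTauCube (s + t) := by
  have h (r : ℕ) : 0 ≤ (r : ℝ) / tau ^ 3 := div_nonneg r.cast_nonneg tau_pow_three_pos.le
  rw [floorDivTauCube, floorDivTauCube, floorDivTauCube, Nat.le_floor_iff (h _), Nat.cast_add,
    Nat.cast_add, add_div]
  exact add_le_add (Nat.floor_le (h s)) (Nat.floor_le (h t))

lemma floorDivTauCube_add_sub_le {s t : ℕ} (h : s ≤ t) :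
    floorDivTauCube s + floorDivTauCube (t - s) ≤ floorDivTauCube t := by
  simpa [Nat.add_sub_cancel' h] using floorDivTauCube_add_le s (t - s)

lemma le_floorDivTauCube_iff {x t : ℕ} :
    x ≤ floorDivTauCube t ↔ 2 * x ≤ t ∧ 5 * (x : ℤ) ^ 2 ≤ (t - 2 * x : ℤ) ^ 2 := by
  rw [floorDivTauCube, Nat.le_floor_iff (div_nonneg t.cast_nonneg tau_pow_three_pos.le),
    le_div_iff₀ tau_pow_three_pos, tau_pow_three]
  have key : (x : ℝ) * (2 + √5) ≤ t ↔ √(5 * x ^ 2) ≤ (t : ℝ) - 2 * x := by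
    rw [Real.sqrt_mul' _ (by positivity), Real.sqrt_sq (by positivity)]
    constructor <;> intro h <;> linarith
  rw [key, Real.sqrt_le_iff, sub_nonneg]
  exact_mod_cast Iff.rfl

/-- `2 f_{k+1} - f_k` is the Lucas number `L_k`. -/
lemma lucas_sq (k : ℕ) :
    (2 * Nat.fib (k + 1) - Nat.fib k : ℤ) ^ 2 = 5 * (Nat.fib k : ℤ) ^ 2 + 4 * (-1) ^ k := by
  induction k with
  | zero => simp
  | succ k ih =>
    have h : (Nat.fib (k + 2) : ℤ) = Nat.fib k + Nat.fib (k + 1) := mod_cast Nat.fib_add_two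
    rw [h]
    linear_combination -ih

lemma lucas_sq_odd (m : ℕ) : (2 * Nat.fib (2 * m + 2) - Nat.fib (2 * m + 1) : ℤ) ^ 2 =
    5 * (Nat.fib (2 * m + 1) : ℤ) ^ 2 - 4 := by
  simpa [Odd.neg_one_pow ⟨m, rfl⟩, sub_eq_add_neg] using lucas_sq (2 * m + 1)

lemma fib_le_floorDivTauCube (m : ℕ) : Nat.fib (2 * m) ≤ floorDivTauCube (Nat.fib (2 * m + 3)) := by
  have hl := lucas_sq (2 * m)
  rw [(even_two_mul m).neg_one_pow] at hl
  have hle : Nat.fib (2 * m) ≤ Nat.fib (2 * m + 1) := Nat.fib_mono (by omega)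
  rw [le_floorDivTauCube_iff, fib_add_three]
  constructor
  · omega
  · push_cast; linarith

lemma fib_sub_one_le_floorDivTauCube (m : ℕ) :
    Nat.fib (2 * m + 1) - 1 ≤ floorDivTauCube (Nat.fib (2 * m + 4)) := by
  have hl := lucas_sq_odd m
  have hle : Nat.fib (2 * m + 1) ≤ Nat.fib (2 * m + 2) := Nat.fib_mono (by omega)
  have hpos : 1 ≤ Nat.fib (2 * m + 1) := Nat.fib_pos.2 (by omega)
  have h4 : Nat.fib (2 * m + 4) = 2 * Nat.fib (2 * m + 2) + Nat.fib (2 * m + 1) := fib_add_three _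
  rw [le_floorDivTauCube_iff, h4]
  constructor
  · omega
  · push_cast [hpos]
    have : (Nat.fib (2 * m + 1) : ℤ) ≤ Nat.fib (2 * m + 2) := mod_cast hle
    nlinarith

lemma floorDivTauCube_lt_fib (m : ℕ) :
    floorDivTauCube (Nat.fib (2 * m + 4)) < Nat.fib (2 * m + 1) := by
  have hl := lucas_sq_odd m
  have h4 : Nat.fib (2 * m + 4) = 2 * Nat.fib (2 * m + 2) + Nat.fib (2 * m + 1) := fib_add_three _
  rw [← not_le, le_floorDivTauCube_iff, h4]
  rintro ⟨-, h⟩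
  push_cast at h
  linarith

lemma ncard_Aset_le (j : ℕ) : (Aset (j + 1)).ncard ≤ 2 ^ floorDivTauCube (Nat.fib (2 * j + 2)) := by
  rcases j with _ | m
  · exact (Set.ncard_singleton _).le.trans Nat.one_le_two_pow
  · refine (ncard_Aset_Bset_le m).1.trans (Nat.pow_le_pow_right two_pos ?_)
    exact fib_sub_one_le_floorDivTauCube m

lemma ncard_Bset_le (j : ℕ) :
    (Bset (j + 1)).ncard ≤ 2 ^ (floorDivTauCube (Nat.fib (2 * j + 1)) + 1) := by
  rcases j with _ | m
  · exact (Set.ncard_singleton _).le.trans Nat.one_le_two_pow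
  · refine (ncard_Aset_Bset_le m).2.trans (Nat.pow_le_pow_right two_pos ?_)
    exact Nat.add_le_add_right (fib_le_floorDivTauCube m) 1

def prefixSet (W : Set Word) (t : ℕ) : Set Word := {p | p.length = t ∧ ∃ w ∈ W, p <+: w}

def suffixSet (W : Set Word) (t : ℕ) : Set Word := {s | s.length = t ∧ ∃ w ∈ W, s <:+ w}

section PrefixSuffix

variable {U V W : Set Word} {L t : ℕ}

lemma prefixSet_finite (W : Set Word) (t : ℕ) : (prefixSet W t).Finite :=
  finite_of_forall_length_eq fun _ h => h.1

lemma suffixSet_finite (W : Set Word) (t : ℕ) : (suffixSet W t).Finite :=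
  finite_of_forall_length_eq fun _ h => h.1

lemma ncard_prefixSet_le (hW : W.Finite) : (prefixSet W t).ncard ≤ W.ncard := by
  refine (Set.ncard_le_ncard ?_ (hW.image (List.take t))).trans (Set.ncard_image_le hW)
  rintro p ⟨rfl, w, hw, hpw⟩
  exact ⟨w, hw, (List.prefix_iff_eq_take.1 hpw).symm⟩

lemma ncard_suffixSet_le (hW : W.Finite) : (suffixSet W t).ncard ≤ W.ncard := by
  refine (Set.ncard_le_ncard ?_ (hW.image fun w => w.drop (w.length - t))).trans
    (Set.ncard_image_le hW)
  rintro s ⟨rfl, w, hw, hsw⟩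
  exact ⟨w, hw, (List.suffix_iff_eq_drop.1 hsw).symm⟩

lemma prefixSet_union : prefixSet (U ∪ V) t = prefixSet U t ∪ prefixSet V t := by
  ext p
  simp only [prefixSet, Set.mem_union, Set.mem_ofPred_eq, or_and_right, exists_or, and_or_left]

lemma suffixSet_union : suffixSet (U ∪ V) t = suffixSet U t ∪ suffixSet V t := by
  ext p
  simp only [suffixSet, Set.mem_union, Set.mem_ofPred_eq, or_and_right, exists_or, and_or_left]

lemma prefixSet_concatSet_subset_of_le (hU : ∀ u ∈ U, u.length = L) (ht : t ≤ L) :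
    prefixSet (concatSet U V) t ⊆ prefixSet U t := by
  rintro p ⟨rfl, _, ⟨u, hu, v, -, rfl⟩, hp⟩
  exact ⟨rfl, u, hu, List.prefix_of_prefix_length_le hp (List.prefix_append u v) (hU u hu ▸ ht)⟩

lemma prefixSet_concatSet_subset_of_lt (hU : ∀ u ∈ U, u.length = L) (ht : L < t) :
    prefixSet (concatSet U V) t ⊆ concatSet U (prefixSet V (t - L)) := by
  rintro p ⟨rfl, _, ⟨u, hu, v, hv, rfl⟩, hp⟩
  obtain ⟨r, rfl⟩ := List.prefix_of_prefix_length_le (List.prefix_append u v) hp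
    (by rw [hU u hu]; exact ht.le)
  refine ⟨u, hu, r, ⟨?_, v, hv, (List.prefix_append_right_inj u).1 hp⟩, rfl⟩
  simp [hU u hu]

lemma suffixSet_concatSet_subset_of_le (hV : ∀ v ∈ V, v.length = L) (ht : t ≤ L) :
    suffixSet (concatSet U V) t ⊆ suffixSet V t := by
  rintro s ⟨rfl, _, ⟨u, -, v, hv, rfl⟩, hs⟩
  exact ⟨rfl, v, hv, List.suffix_of_suffix_length_le hs (List.suffix_append u v) (hV v hv ▸ ht)⟩

lemma suffixSet_concatSet_subset_of_lt (hV : ∀ v ∈ V, v.length = L) (ht : L < t) :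
    suffixSet (concatSet U V) t ⊆ concatSet (suffixSet U (t - L)) V := by
  rintro s ⟨rfl, _, ⟨u, hu, v, hv, rfl⟩, hs⟩
  obtain ⟨r, rfl⟩ := List.suffix_of_suffix_length_le (List.suffix_append u v) hs
    (by rw [hV v hv]; exact ht.le)
  refine ⟨r, ⟨?_, u, hu, List.suffix_append_self_iff.1 hs⟩, v, hv, rfl⟩
  simp [hV v hv]

end PrefixSuffix

def HasPrefixBound (W : Set Word) (c : ℕ) : Prop :=
  ∀ t, (prefixSet W t).ncard ≤ 2 ^ (floorDivTauCube t + c)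

def HasSuffixBound (W : Set Word) (c : ℕ) : Prop :=
  ∀ t, (suffixSet W t).ncard ≤ 2 ^ (floorDivTauCube t + c)

section Bounds

variable {U V W : Set Word} {c c' d L : ℕ}

lemma HasPrefixBound.mono (h : HasPrefixBound W c) (hc : c ≤ c') : HasPrefixBound W c' :=
  fun t => (h t).trans (Nat.pow_le_pow_right two_pos (by omega))

lemma HasSuffixBound.mono (h : HasSuffixBound W c) (hc : c ≤ c') : HasSuffixBound W c' :=
  fun t => (h t).trans (Nat.pow_le_pow_right two_pos (by omega))

lemma HasPrefixBound.of_ncard_le (hW : W.Finite) (h : W.ncard ≤ 2 ^ c) : HasPrefixBound W c :=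
  fun _ => (ncard_prefixSet_le hW).trans (h.trans (Nat.pow_le_pow_right two_pos (by omega)))

lemma HasSuffixBound.of_ncard_le (hW : W.Finite) (h : W.ncard ≤ 2 ^ c) : HasSuffixBound W c :=
  fun _ => (ncard_suffixSet_le hW).trans (h.trans (Nat.pow_le_pow_right two_pos (by omega)))

lemma HasPrefixBound.union (hU : HasPrefixBound U c) (hV : HasPrefixBound V c) :
    HasPrefixBound (U ∪ V) (c + 1) := fun t => by
  rw [prefixSet_union, ← add_assoc, pow_succ, mul_two]
  exact (Set.ncard_union_le _ _).trans (Nat.add_le_add (hU t) (hV t))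

lemma HasSuffixBound.union (hU : HasSuffixBound U c) (hV : HasSuffixBound V c) :
    HasSuffixBound (U ∪ V) (c + 1) := fun t => by
  rw [suffixSet_union, ← add_assoc, pow_succ, mul_two]
  exact (Set.ncard_union_le _ _).trans (Nat.add_le_add (hU t) (hV t))

/-- Superadditivity of `floorDivTauCube` absorbs the `2 ^ (floorDivTauCube L + d)` choices of the
first factor of a prefix longer than `L`. -/
lemma HasPrefixBound.concatSet (hlen : ∀ u ∈ U, u.length = L)
    (hcard : U.ncard ≤ 2 ^ (floorDivTauCube L + d)) (hU : HasPrefixBound U c)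
    (hV : HasPrefixBound V c') (hc : d + c' ≤ c) : HasPrefixBound (concatSet U V) c := by
  intro t
  rcases le_or_gt t L with ht | ht
  · exact (Set.ncard_le_ncard (prefixSet_concatSet_subset_of_le hlen ht)
      (prefixSet_finite _ _)).trans (hU t)
  · have hUfin := finite_of_forall_length_eq hlen
    refine (Set.ncard_le_ncard (prefixSet_concatSet_subset_of_lt hlen ht)
      (hUfin.concatSet (prefixSet_finite _ _))).trans
      ((ncard_concatSet_le_two_pow hUfin (prefixSet_finite _ _) hcard (hV _)).trans
      (Nat.pow_le_pow_right two_pos ?_))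
    have := floorDivTauCube_add_sub_le ht.le
    omega

lemma HasSuffixBound.concatSet (hlen : ∀ v ∈ V, v.length = L)
    (hcard : V.ncard ≤ 2 ^ (floorDivTauCube L + d)) (hV : HasSuffixBound V c)
    (hU : HasSuffixBound U c') (hc : d + c' ≤ c) : HasSuffixBound (concatSet U V) c := by
  intro t
  rcases le_or_gt t L with ht | ht
  · exact (Set.ncard_le_ncard (suffixSet_concatSet_subset_of_le hlen ht)
      (suffixSet_finite _ _)).trans (hV t)
  · have hVfin := finite_of_forall_length_eq hlen
    refine (Set.ncard_le_ncard (suffixSet_concatSet_subset_of_lt hlen ht)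
      ((suffixSet_finite _ _).concatSet hVfin)).trans
      ((ncard_concatSet_le_two_pow (suffixSet_finite _ _) hVfin (hU _) hcard).trans
      (Nat.pow_le_pow_right two_pos ?_))
    have := floorDivTauCube_add_sub_le ht.le
    omega

end Bounds

lemma hasPrefixBound_Aset_Bset (j : ℕ) :
    HasPrefixBound (Aset (j + 1)) j ∧ HasPrefixBound (Bset (j + 1)) (j + 1) := by
  induction j with
  | zero =>
    exact ⟨.of_ncard_le (Aset_finite 0) (Set.ncard_singleton _).le,
      .of_ncard_le (Bset_finite 0) ((Set.ncard_singleton _).le.trans (by norm_num))⟩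
  | succ j ih =>
    obtain ⟨hA, hB⟩ := ih
    have hAA := hA.concatSet (d := 0) (fun _ => length_of_mem_Aset) (ncard_Aset_le j) hA (by omega)
    refine ⟨hB.concatSet (fun _ => length_of_mem_Bset) (ncard_Bset_le j) hAA (by omega), ?_⟩
    exact HasPrefixBound.union
      ((hA.mono j.le_succ).concatSet (d := 0) (fun _ => length_of_mem_Aset) (ncard_Aset_le j) hB
        (by omega))
      (hB.concatSet (fun _ => length_of_mem_Bset) (ncard_Bset_le j) hA (by omega))

lemma hasSuffixBound_Aset_Bset (j : ℕ) :
    HasSuffixBound (Aset (j + 1)) j ∧ HasSuffixBound (Bset (j + 1)) (j + 1) := by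
  induction j with
  | zero =>
    exact ⟨.of_ncard_le (Aset_finite 0) (Set.ncard_singleton _).le,
      .of_ncard_le (Bset_finite 0) ((Set.ncard_singleton _).le.trans (by norm_num))⟩
  | succ j ih =>
    obtain ⟨hA, hB⟩ := ih
    have hlenA : ∀ w ∈ Aset (j + 1), w.length = Nat.fib (2 * j + 2) := fun _ => length_of_mem_Aset
    have hAA := HasSuffixBound.concatSet (d := 0) hlenA (ncard_Aset_le j) hA hA (by omega)
    have hcardAA : (concatSet (Aset (j + 1)) (Aset (j + 1))).ncard ≤
        2 ^ (floorDivTauCube (Nat.fib (2 * j + 2) + Nat.fib (2 * j + 2)) + 0) :=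
      (ncard_concatSet_le_two_pow (Aset_finite j) (Aset_finite j) (ncard_Aset_le j)
        (ncard_Aset_le j)).trans (Nat.pow_le_pow_right two_pos (floorDivTauCube_add_le _ _))
    refine ⟨HasSuffixBound.concatSet (length_of_mem_concatSet hlenA hlenA) hcardAA
      (hAA.mono j.le_succ) hB (by omega), ?_⟩
    exact HasSuffixBound.union
      (HasSuffixBound.concatSet (fun _ => length_of_mem_Bset) (ncard_Bset_le j) hB hA (by omega))
      (HasSuffixBound.concatSet (d := 0) hlenA (ncard_Aset_le j) (hA.mono j.le_succ) hB
        (by omega))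

def blocks (n : ℕ) : Language Letter := (Aset (n + 1) ∪ Bset (n + 1) : Set Word)

lemma mem_kstar_blocks {n k : ℕ} (hnk : n ≤ k) :
    (∀ w ∈ Aset (k + 1), w ∈ (blocks n)∗) ∧ ∀ w ∈ Bset (k + 1), w ∈ (blocks n)∗ := by
  induction k, hnk using Nat.le_induction with
  | base => exact ⟨fun w hw => le_kstar (a := blocks n) (Or.inl hw),
      fun w hw => le_kstar (a := blocks n) (Or.inr hw)⟩
  | succ k _ ih =>
    refine ⟨mem_kstar_of_mem_concatSet ih.2 (mem_kstar_of_mem_concatSet ih.1 ih.1), ?_⟩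
    rintro w (hw | hw)
    exacts [mem_kstar_of_mem_concatSet ih.1 ih.2 w hw, mem_kstar_of_mem_concatSet ih.2 ih.1 w hw]

lemma List.exists_suffix_prefix_of_infix_flatten {α : Type*} {x : List α} {l : List (List α)}
    (hx : x <:+: l.flatten) (hne : x ≠ []) (hlen : ∀ u ∈ l, u.length ≤ x.length) :
    ∃ u l₂ s p, u :: l₂ <:+ l ∧ s ≠ [] ∧ s <:+ u ∧ p <+: l₂.flatten ∧ x = s ++ p := by
  induction l with
  | nil => exact absurd (List.infix_nil.1 hx) hne
  | cons u r ih =>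
    rw [List.flatten_cons, List.infix_append_iff_ne_nil] at hx
    rcases hx with hxu | hxr | ⟨s, p, hs, -, rfl, hsu, hpr⟩
    · refine ⟨u, r, x, [], List.suffix_refl _, hne, ?_, List.nil_prefix, (List.append_nil x).symm⟩
      rw [hxu.eq_of_length_le (hlen u List.mem_cons_self)]
    · obtain ⟨v, l₂, s, p, hvl, h⟩ := ih hxr fun v hv => hlen v (List.mem_cons_of_mem u hv)
      exact ⟨v, l₂, s, p, hvl.trans (List.suffix_cons u r), h⟩
    · exact ⟨u, r, s, p, List.suffix_refl _, hs, hsu, hpr, rfl⟩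

lemma mem_prefixSet_of_prefix_flatten {W : Set Word} {l : List Word} {p : Word}
    (hl : ∀ u ∈ l, u ∈ W) (hW : W.Nonempty) (hp : p <+: l.flatten)
    (hlen : ∀ u ∈ W, p.length ≤ u.length) : p ∈ prefixSet W p.length := by
  rcases l with _ | ⟨u, r⟩
  · obtain ⟨w, hw⟩ := hW
    rw [List.flatten_nil, List.prefix_nil] at hp
    exact ⟨rfl, w, hw, hp ▸ List.nil_prefix⟩
  · have hu := hl u List.mem_cons_self
    exact ⟨rfl, u, hu, List.prefix_of_prefix_length_le hp (List.prefix_append _ _) (hlen u hu)⟩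

def bridgeSet (W M : Set Word) (t : ℕ) : Set Word :=
  ⋃ i ∈ Finset.range (t + 1), concatSet (suffixSet W i) (concatSet M (prefixSet W (t - i)))

section Bridge

variable {W M : Set Word}

lemma append_mem_bridgeSet {s m p : Word} (hs : s ∈ suffixSet W s.length) (hm : m ∈ M)
    (hp : p ∈ prefixSet W p.length) : s ++ (m ++ p) ∈ bridgeSet W M (s.length + p.length) := by
  refine Set.mem_biUnion (x := s.length) (Finset.mem_range.2 (by omega)) ?_
  exact ⟨s, hs, m ++ p, ⟨m, hm, p, by rwa [Nat.add_sub_cancel_left], rfl⟩, rfl⟩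

lemma bridgeSet_finite (hM : M.Finite) (t : ℕ) : (bridgeSet W M t).Finite :=
  (Finset.range (t + 1)).finite_toSet.biUnion fun _ _ =>
    (suffixSet_finite _ _).concatSet (hM.concatSet (prefixSet_finite _ _))

lemma ncard_bridgeSet_le {c d t : ℕ} (hM : M.Finite) (hMcard : M.ncard ≤ 2 ^ d)
    (hP : HasPrefixBound W c) (hS : HasSuffixBound W c) :
    (bridgeSet W M t).ncard ≤ (t + 1) * 2 ^ (floorDivTauCube t + d + 2 * c) := by
  refine (Finset.set_ncard_biUnion_le _ _).trans ?_
  refine (Finset.sum_le_card_nsmul _ _ (2 ^ (floorDivTauCube t + d + 2 * c)) fun i hi => ?_).trans_eq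
    (by rw [Finset.card_range, smul_eq_mul])
  have hit := floorDivTauCube_add_sub_le (Nat.lt_succ_iff.1 (Finset.mem_range.1 hi))
  refine (ncard_concatSet_le_two_pow (suffixSet_finite _ _)
    (hM.concatSet (prefixSet_finite _ _)) (hS i)
    (ncard_concatSet_le_two_pow hM (prefixSet_finite _ _) hMcard (hP _))).trans
    (Nat.pow_le_pow_right two_pos (by omega))

end Bridge

/-- Blocks of level `k + 1` are at least `f_{2k+1}` long, so a factor of length
`f_{2k+2} = f_{2k} + f_{2k+1}` that starts inside one block can swallow at most one whole further
block, necessarily a `B`-block, and then ends within the next one. -/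
lemma mem_bridgeSet_of_infix_flatten (k : ℕ) {l : List Word} {x : Word}
    (hl : ∀ u ∈ l, u ∈ Aset (k + 1) ∪ Bset (k + 1)) (hx : x <:+: l.flatten)
    (hxlen : x.length = Nat.fib (2 * k + 2)) :
    x ∈ bridgeSet (Aset (k + 1) ∪ Bset (k + 1)) {[]} (Nat.fib (2 * k + 2)) ∪
      bridgeSet (Aset (k + 1) ∪ Bset (k + 1)) (Bset (k + 1)) (Nat.fib (2 * k)) := by
  set W := Aset (k + 1) ∪ Bset (k + 1)
  have hrec : Nat.fib (2 * k + 2) = Nat.fib (2 * k) + Nat.fib (2 * k + 1) := Nat.fib_add_two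
  have hmono : Nat.fib (2 * k) ≤ Nat.fib (2 * k + 1) := Nat.fib_mono (by omega)
  have hlenW : ∀ u ∈ W, Nat.fib (2 * k + 1) ≤ u.length ∧ u.length ≤ Nat.fib (2 * k + 2) := by
    rintro u (hu | hu)
    · rw [length_of_mem_Aset hu]; omega
    · rw [length_of_mem_Bset hu]; omega
  have hW : W.Nonempty := (Aset_Bset_nonempty k).1.mono Set.subset_union_left
  have hne : x ≠ [] := List.ne_nil_of_length_pos (by rw [hxlen]; exact Nat.fib_pos.2 (by omega))
  obtain ⟨u, l₂, s, p, hul, hs, hsu, hp, rfl⟩ :=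
    List.exists_suffix_prefix_of_infix_flatten hx hne fun u hu => hxlen ▸ (hlenW u (hl u hu)).2
  have hl₂ : ∀ v ∈ l₂, v ∈ W := fun v hv => hl v (hul.subset (List.mem_cons_of_mem u hv))
  have hsW : s ∈ suffixSet W s.length := ⟨rfl, u, hl u (hul.subset List.mem_cons_self), hsu⟩
  have hs1 : 1 ≤ s.length := List.length_pos_iff.2 hs
  rw [List.length_append] at hxlen
  rcases l₂ with _ | ⟨v, l₃⟩
  · left
    have hpW := mem_prefixSet_of_prefix_flatten hl₂ hW hp
      fun u hu => (List.prefix_nil.1 hp) ▸ Nat.zero_le _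
    exact hxlen ▸ append_mem_bridgeSet (m := []) hsW rfl hpW
  · have hv := hl₂ v List.mem_cons_self
    by_cases hpv : p.length ≤ v.length
    · left
      exact hxlen ▸ append_mem_bridgeSet (m := []) hsW rfl
        ⟨rfl, v, hv, List.prefix_of_prefix_length_le hp (List.prefix_append _ _) hpv⟩
    · right
      obtain ⟨p', rfl⟩ := List.prefix_of_prefix_length_le (List.prefix_append v l₃.flatten) hp
        (by omega)
      have hvB : v ∈ Bset (k + 1) := by
        refine hv.resolve_left fun hvA => ?_
        rw [List.length_append, length_of_mem_Aset hvA] at hxlen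
        omega
      rw [List.length_append, length_of_mem_Bset hvB] at hxlen
      have hp'W := mem_prefixSet_of_prefix_flatten
        (fun w hw => hl₂ w (List.mem_cons_of_mem v hw)) hW
        ((List.prefix_append_right_inj v).1 hp) fun w hw => by have := hlenW w hw; omega
      exact (show s.length + p'.length = Nat.fib (2 * k) by omega) ▸
        append_mem_bridgeSet hsW hvB hp'W

lemma FA_subset_bridgeSet (k : ℕ) :
    FA (Nat.fib (2 * k + 2)) ⊆
      bridgeSet (Aset (k + 1) ∪ Bset (k + 1)) {[]} (Nat.fib (2 * k + 2)) ∪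
        bridgeSet (Aset (k + 1) ∪ Bset (k + 1)) (Bset (k + 1)) (Nat.fib (2 * k)) := by
  intro x hx
  simp only [FA, Set.mem_iUnion, Set.mem_ofPred_eq, exists_prop] at hx
  obtain ⟨_ | j, hj, hxlen, w, hw, hxw⟩ := hx
  · omega
  rcases le_or_gt k j with hkj | hjk
  · obtain ⟨l, rfl, hl⟩ := Language.mem_kstar.1 ((mem_kstar_blocks hkj).1 w hw)
    exact mem_bridgeSet_of_infix_flatten k hl hxw.isInfix hxlen
  · have := hxw.isInfix.length_le
    rw [hxlen, length_of_mem_Aset hw] at this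
    have h1 : Nat.fib (2 * j + 2) ≤ Nat.fib (2 * k) := Nat.fib_mono (by omega)
    have h2 : Nat.fib (2 * k + 2) = Nat.fib (2 * k) + Nat.fib (2 * k + 1) := Nat.fib_add_two
    have h3 : 0 < Nat.fib (2 * k + 1) := Nat.fib_pos.2 (by omega)
    omega

lemma ncard_FA_fib_le (k : ℕ) :
    (FA (Nat.fib (2 * k + 2))).ncard ≤
      (2 * (Nat.fib (2 * k + 2) + 1) + 4 * (Nat.fib (2 * k) + 1)) *
        2 ^ (floorDivTauCube (Nat.fib (2 * k + 2)) + 2 * k + 3) := by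
  set W := Aset (k + 1) ∪ Bset (k + 1)
  have hP : HasPrefixBound W (k + 2) :=
    ((hasPrefixBound_Aset_Bset k).1.mono k.le_succ).union (hasPrefixBound_Aset_Bset k).2
  have hS : HasSuffixBound W (k + 2) :=
    ((hasSuffixBound_Aset_Bset k).1.mono k.le_succ).union (hasSuffixBound_Aset_Bset k).2
  have hT2 := ncard_bridgeSet_le (t := Nat.fib (2 * k + 2)) (d := 0) (Set.finite_singleton [])
    (Set.ncard_singleton []).le hP hS
  have hT3 := ncard_bridgeSet_le (t := Nat.fib (2 * k)) (Bset_finite k) (ncard_Bset_le k) hP hS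
  have hexp : floorDivTauCube (Nat.fib (2 * k)) + floorDivTauCube (Nat.fib (2 * k + 1)) ≤
      floorDivTauCube (Nat.fib (2 * k + 2)) :=
    (floorDivTauCube_add_le _ _).trans_eq (by rw [← Nat.fib_add_two])
  have hfin := (bridgeSet_finite (W := W) (Set.finite_singleton []) (Nat.fib (2 * k + 2))).union
    (bridgeSet_finite (W := W) (Bset_finite k) (Nat.fib (2 * k)))
  set e := floorDivTauCube (Nat.fib (2 * k + 2)) + 2 * k + 3
  calc (FA (Nat.fib (2 * k + 2))).ncard
      ≤ (bridgeSet W {[]} (Nat.fib (2 * k + 2))).ncard +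
          (bridgeSet W (Bset (k + 1)) (Nat.fib (2 * k))).ncard :=
        (Set.ncard_le_ncard (FA_subset_bridgeSet k) hfin).trans (Set.ncard_union_le _ _)
    _ ≤ (Nat.fib (2 * k + 2) + 1) * 2 ^ (e + 1) + (Nat.fib (2 * k) + 1) * 2 ^ (e + 2) :=
        Nat.add_le_add
          (hT2.trans (Nat.mul_le_mul_left _ (Nat.pow_le_pow_right two_pos (by omega))))
          (hT3.trans (Nat.mul_le_mul_left _ (Nat.pow_le_pow_right two_pos (by omega))))
    _ = _ := by ring

lemma fib_add_four_le_pow_five (m : ℕ) (hm : 2 ≤ m) :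
    2 * (Nat.fib (2 * m + 4) + 1) + 4 * (Nat.fib (2 * m + 2) + 1) ≤ 5 ^ (m + 1) := by
  induction m, hm using Nat.le_induction with
  | base => decide
  | succ m _ ih =>
    have h6 : Nat.fib (2 * m + 6) = Nat.fib (2 * m + 4) + Nat.fib (2 * m + 5) := Nat.fib_add_two
    have h5 : Nat.fib (2 * m + 5) = Nat.fib (2 * m + 3) + Nat.fib (2 * m + 4) := Nat.fib_add_two
    have h4 : Nat.fib (2 * m + 4) = Nat.fib (2 * m + 2) + Nat.fib (2 * m + 3) := Nat.fib_add_two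
    rw [show 2 * (m + 1) + 4 = 2 * m + 6 by ring, show 2 * (m + 1) + 2 = 2 * m + 4 by ring,
      pow_succ]
    omega

lemma ncard_FA_le_two_pow (m : ℕ) : (FA m).ncard ≤ 2 ^ m := by
  refine (Set.ncard_le_ncard ?_ (List.finite_length_eq Letter m)).trans
    (ncard_setOf_length_eq m).le
  intro x hx
  simp only [FA, Set.mem_iUnion] at hx
  obtain ⟨_, _, hx, -⟩ := hx
  exact hx

theorem card_FA_le (n : ℕ) (hn : 2 ≤ n) :
    (FA (Nat.fib (2 * n))).ncard ≤ 2 ^ (Nat.fib (2 * n - 3) + 2 * n) * 5 ^ (n - 1) := by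
  obtain ⟨m, rfl⟩ : ∃ m, n = m + 2 := ⟨n - 2, by omega⟩
  rw [show 2 * (m + 2) - 3 = 2 * m + 1 by omega, show m + 2 - 1 = m + 1 by omega]
  rcases lt_or_ge m 2 with hm | hm
  · refine (ncard_FA_le_two_pow _).trans ?_
    interval_cases m <;> decide
  · have hFA := ncard_FA_fib_le (m + 1)
    rw [show 2 * (m + 1) + 2 = 2 * m + 4 by ring, show 2 * (m + 1) = 2 * m + 2 by ring] at hFA
    rw [show 2 * (m + 2) = 2 * m + 4 by ring]
    have he := floorDivTauCube_lt_fib m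
    calc _ ≤ 5 ^ (m + 1) * 2 ^ (Nat.fib (2 * m + 1) + (2 * m + 4)) :=
          hFA.trans (Nat.mul_le_mul (fib_add_four_le_pow_five m hm)
            (Nat.pow_le_pow_right two_pos (by omega)))
      _ = _ := Nat.mul_comm _ _
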